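/- arXiv:2405.10117 — 2 statements merged into one kernel-verified Lean document; each statement's English description precedes it below -/
import Mathlib

section
/- Let E0 > 0, k ∈ ℂ, λ ∈ ℂ with λ² = E0² + k², ζ := k + λ nonzero, and E ∈ ℂ² with ‖E‖ = E0. Let J = diag(1,−1,−1), Q = [[0, −Eᵀ],[E*, 0₂ₓ₂]] (3×3), X := ikJ + Q, Λ := diag(λ, −k, −λ), and let Y(ζ) be the eigenvector matrix with columns (1, −iE*/ζ)ᵀ, (0, (E^⊥)*/E0)ᵀ, (−iE0/ζ, E*/E0)ᵀ. Then X·Y(ζ) = i·Y(ζ)·Λ. -/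
/-!
The columns of `Y` are eigenvectors of `X` for the eigenvalues `iλ`, `-ik`, `-iλ`. Checking this
row by row, everything reduces to `|E|² = E0² = λ² - k² = (λ - k) ζ`.
-/

open Matrix Complex ComplexConjugate

theorem Matrix.mul_transpose_of_eq_smul_mul_diagonal {n R : Type*} [Fintype n] [DecidableEq n]
    [CommSemiring R] (A : Matrix n n R) (v : n → n → R) (c : R) (d : n → R)
    (h : ∀ j, A *ᵥ v j = (c * d j) • v j) :
    A * (of v)ᵀ = c • ((of v)ᵀ * diagonal d) := by
  ext i j
  have hj := congrFun (h j) i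
  simp only [mulVec, dotProduct, Pi.smul_apply, smul_eq_mul] at hj
  rw [smul_apply, mul_diagonal, smul_eq_mul, mul_apply]
  simp only [transpose_apply, of_apply]
  rw [hj]
  ring

def asymptoticLaxMatrix (k : ℂ) (E : Fin 2 → ℂ) : Matrix (Fin 3) (Fin 3) ℂ :=
  (I * k) • diagonal ![1, -1, -1] + !![0, -E 0, -E 1; conj (E 0), 0, 0; conj (E 1), 0, 0]

theorem asymptoticLaxMatrix_mulVec (k : ℂ) (E : Fin 2 → ℂ) (v : Fin 3 → ℂ) :
    asymptoticLaxMatrix k E *ᵥ v =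
      ![I * k * v 0 - E 0 * v 1 - E 1 * v 2, conj (E 0) * v 0 - I * k * v 1,
        conj (E 1) * v 0 - I * k * v 2] := by
  ext i
  fin_cases i <;> simp [asymptoticLaxMatrix, mulVec, dotProduct, Fin.sum_univ_three] <;> ring

theorem conj_mul_add_conj_mul_eq_sq (E : Fin 2 → ℂ) (a : ℝ) (hE : ‖E 0‖^2 + ‖E 1‖^2 = a^2) :
    conj (E 0) * E 0 + conj (E 1) * E 1 = (a : ℂ) ^ 2 := by
  simp only [conj_mul']
  exact_mod_cast hE

section
variable {k lam a : ℂ} {E : Fin 2 → ℂ}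

theorem asymptoticLaxMatrix_mulVec_eigenvector_lam
    (hE : conj (E 0) * E 0 + conj (E 1) * E 1 = a ^ 2) (hlam : lam ^ 2 = a ^ 2 + k ^ 2)
    (hζ : k + lam ≠ 0) :
    asymptoticLaxMatrix k E *ᵥ ![1, -I * conj (E 0) / (k + lam), -I * conj (E 1) / (k + lam)] =
      (I * lam) • ![1, -I * conj (E 0) / (k + lam), -I * conj (E 1) / (k + lam)] := by
  rw [asymptoticLaxMatrix_mulVec]
  ext i
  fin_cases i <;> simp <;> field_simp
  · linear_combination hE - hlam
  · linear_combination (conj (E 0) * (k + lam)) * I_sq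
  · linear_combination (conj (E 1) * (k + lam)) * I_sq

theorem asymptoticLaxMatrix_mulVec_eigenvector_neg_k :
    asymptoticLaxMatrix k E *ᵥ ![0, E 1 / a, -E 0 / a] = (I * -k) • ![0, E 1 / a, -E 0 / a] := by
  rw [asymptoticLaxMatrix_mulVec]
  ext i
  fin_cases i <;> simp; ring

theorem asymptoticLaxMatrix_mulVec_eigenvector_neg_lam
    (hE : conj (E 0) * E 0 + conj (E 1) * E 1 = a ^ 2) (hlam : lam ^ 2 = a ^ 2 + k ^ 2)
    (hζ : k + lam ≠ 0) (ha : a ≠ 0) :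
    asymptoticLaxMatrix k E *ᵥ ![-I * a / (k + lam), conj (E 0) / a, conj (E 1) / a] =
      (I * -lam) • ![-I * a / (k + lam), conj (E 0) / a, conj (E 1) / a] := by
  rw [asymptoticLaxMatrix_mulVec]
  ext i
  fin_cases i <;> simp <;> field_simp
  · linear_combination (-(k + lam) * a ^ 2) * I_sq - (k + lam) * hE
  · linear_combination conj (E 0) * hlam
  · linear_combination conj (E 1) * hlam
end

/-- Eigenvalue relation X·Y(ζ) = i·Y(ζ)·Λ for the asymptotic scattering matrix
X = ikJ + Q of the CMBE Lax pair, with Λ = diag(λ, −k, −λ). -/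
theorem stmt3 (E0 : ℝ) (hE0 : 0 < E0) (k lam : ℂ)
    (hlam : lam^2 = (E0 : ℂ)^2 + k^2) (hζ : k + lam ≠ 0)
    (E : Fin 2 → ℂ) (hE : ‖E 0‖^2 + ‖E 1‖^2 = E0^2) :
    let ζ : ℂ := k + lam
    let J : Matrix (Fin 3) (Fin 3) ℂ := Matrix.diagonal ![1, -1, -1]
    let Q : Matrix (Fin 3) (Fin 3) ℂ :=
      !![0, -(E 0), -(E 1); starRingEnd ℂ (E 0), 0, 0; starRingEnd ℂ (E 1), 0, 0]
    let X : Matrix (Fin 3) (Fin 3) ℂ := (Complex.I*k) • J + Q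
    let L : Matrix (Fin 3) (Fin 3) ℂ := Matrix.diagonal ![lam, -k, -lam]
    let Y : Matrix (Fin 3) (Fin 3) ℂ :=
      !![1, 0, -Complex.I*E0/ζ;
         -Complex.I*(starRingEnd ℂ (E 0))/ζ, (E 1)/E0, (starRingEnd ℂ (E 0))/E0;
         -Complex.I*(starRingEnd ℂ (E 1))/ζ, -(E 0)/E0, (starRingEnd ℂ (E 1))/E0]
    X * Y = Complex.I • (Y * L) := by
  intro ζ J Q X L Y
  have hnorm := conj_mul_add_conj_mul_eq_sq E E0 hE
  have hY : Y = (of ![![1, -I * conj (E 0) / ζ, -I * conj (E 1) / ζ], ![0, E 1 / E0, -E 0 / E0],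
      ![-I * E0 / ζ, conj (E 0) / E0, conj (E 1) / E0]])ᵀ := by
    ext i j
    fin_cases i <;> fin_cases j <;> rfl
  rw [hY]
  refine mul_transpose_of_eq_smul_mul_diagonal (asymptoticLaxMatrix k E) _ I _ fun j => ?_
  fin_cases j
  · exact asymptoticLaxMatrix_mulVec_eigenvector_lam hnorm hlam hζ
  · exact asymptoticLaxMatrix_mulVec_eigenvector_neg_k
  · exact asymptoticLaxMatrix_mulVec_eigenvector_neg_lam hnorm hlam hζ (mod_cast hE0.ne')
end

section
/- Let E0 > 0, E ∈ ℂ² with ‖E‖ = E0, ζ ∈ ℂ \ {0} with ζ² ≠ −E0², λ = (ζ + E0²/ζ)/2, and Q = [[0,−Eᵀ],[E*,0]]. Let Y(ζ) be the eigenvector matrix (columns as above) and ϱ_dd = diag(ϱ₁, ϱ₂, ϱ₃) any real diagonal matrix. Then [J, Y(ζ) ϱ_dd Y(ζ)⁻¹] = −(i/λ)(ϱ₁ − ϱ₃)·J·Q. -/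
/-!
Writing out `Y⁻¹` (it exists because `γ(ζ) ≠ 0` and `‖E‖ = E₀`), a direct computation shows that
`Y D Y⁻¹ + c Q` is block diagonal, i.e. commutes with `J`, for `c = i (ϱ₁ - ϱ₃) / (2λ)`. Since `Q` is
block off-diagonal it anticommutes with `J`, hence `[J, Y D Y⁻¹] = -c [J, Q] = -2c J Q`.
-/

open Matrix Complex ComplexConjugate

theorem Matrix.diagonal_mul_sub_mul_diagonal_apply {n R : Type*} [Fintype n] [DecidableEq n]
    [CommRing R] (d : n → R) (M : Matrix n n R) (i j : n) :
    (diagonal d * M - M * diagonal d) i j = (d i - d j) * M i j := by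
  simp only [sub_apply, diagonal_mul, mul_diagonal]
  ring

namespace Manakov

noncomputable def J : Matrix (Fin 3) (Fin 3) ℂ := diagonal ![1, -1, -1]

variable (E₀ ζ : ℂ) (E : Fin 2 → ℂ)

noncomputable def potential : Matrix (Fin 3) (Fin 3) ℂ :=
  !![0, -E 0, -E 1; conj (E 0), 0, 0; conj (E 1), 0, 0]

noncomputable def eigenvectorMatrix : Matrix (Fin 3) (Fin 3) ℂ :=
  !![1, 0, -I * E₀ / ζ;
     -I * conj (E 0) / ζ, E 1 / E₀, conj (E 0) / E₀;
     -I * conj (E 1) / ζ, -E 0 / E₀, conj (E 1) / E₀]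

-- `1 + E₀ ^ 2 / ζ ^ 2` is the paper's `γ(ζ)`.
noncomputable def eigenvectorMatrixInv : Matrix (Fin 3) (Fin 3) ℂ :=
  (1 + E₀ ^ 2 / ζ ^ 2)⁻¹ •
    !![1, I * E 0 / ζ, I * E 1 / ζ;
       0, (1 + E₀ ^ 2 / ζ ^ 2) * conj (E 1) / E₀, -(1 + E₀ ^ 2 / ζ ^ 2) * conj (E 0) / E₀;
       I * E₀ / ζ, E 0 / E₀, E 1 / E₀]

variable {E₀ ζ E}

theorem eigenvectorMatrix_mul_eigenvectorMatrixInv (hE₀ : E₀ ≠ 0) (hγ : 1 + E₀ ^ 2 / ζ ^ 2 ≠ 0)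
    (hE : conj (E 0) * E 0 + conj (E 1) * E 1 = E₀ ^ 2) :
    eigenvectorMatrix E₀ ζ E * eigenvectorMatrixInv E₀ ζ E = 1 := by
  ext i j
  fin_cases i <;> fin_cases j <;>
    simp [eigenvectorMatrix, eigenvectorMatrixInv, mul_apply, Fin.sum_univ_three, one_apply] <;>
    field_simp <;> ring_nf <;> simp only [I_sq] <;>
    first | ring1 | linear_combination (1 + E₀ ^ 2 * ζ⁻¹ ^ 2) * hE

theorem inv_eigenvectorMatrix (hE₀ : E₀ ≠ 0) (hγ : 1 + E₀ ^ 2 / ζ ^ 2 ≠ 0)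
    (hE : conj (E 0) * E 0 + conj (E 1) * E 1 = E₀ ^ 2) :
    (eigenvectorMatrix E₀ ζ E)⁻¹ = eigenvectorMatrixInv E₀ ζ E :=
  inv_eq_right_inv (eigenvectorMatrix_mul_eigenvectorMatrixInv hE₀ hγ hE)

theorem potential_mul_J : potential E * J = -(J * potential E) := by
  ext i j
  fin_cases i <;> fin_cases j <;> simp [potential, J]

theorem commute_J_conj_diagonal_add_smul_potential (hE₀ : E₀ ≠ 0) (hζ : ζ ≠ 0) (d : Fin 3 → ℂ) :
    Commute J (eigenvectorMatrix E₀ ζ E * diagonal d * eigenvectorMatrixInv E₀ ζ E +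
      (I * (d 0 - d 2) / (ζ + E₀ ^ 2 / ζ)) • potential E) := by
  rw [Commute, SemiconjBy, ← sub_eq_zero]
  ext i j
  rw [J, diagonal_mul_sub_mul_diagonal_apply]
  fin_cases i <;> fin_cases j <;>
    simp [mul_apply, Fin.sum_univ_three] <;>
    simp [eigenvectorMatrix, eigenvectorMatrixInv, potential] <;>
    field_simp <;> ring_nf <;> simp

end Manakov

/-- Key commutator identity: for real diagonal ϱ_dd = diag(ϱ₁,ϱ₂,ϱ₃),
[J, Y(ζ) ϱ_dd Y(ζ)⁻¹] = −(i/λ)(ϱ₁ − ϱ₃) · J·Q. -/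
theorem stmt13 (E0 : ℝ) (hE0 : 0 < E0) (ζ : ℂ) (hζ : ζ ≠ 0)
    (hζ2 : ζ^2 ≠ -(E0 : ℂ)^2)
    (E : Fin 2 → ℂ) (hE : ‖E 0‖^2 + ‖E 1‖^2 = E0^2)
    (ϱ₁ ϱ₂ ϱ₃ : ℝ) :
    let lam : ℂ := (ζ + (E0 : ℂ)^2/ζ)/2
    let J : Matrix (Fin 3) (Fin 3) ℂ := Matrix.diagonal ![1, -1, -1]
    let Q : Matrix (Fin 3) (Fin 3) ℂ :=
      !![0, -(E 0), -(E 1); starRingEnd ℂ (E 0), 0, 0; starRingEnd ℂ (E 1), 0, 0]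
    let Y : Matrix (Fin 3) (Fin 3) ℂ :=
      !![1, 0, -Complex.I*E0/ζ;
         -Complex.I*(starRingEnd ℂ (E 0))/ζ, (E 1)/E0, (starRingEnd ℂ (E 0))/E0;
         -Complex.I*(starRingEnd ℂ (E 1))/ζ, -(E 0)/E0, (starRingEnd ℂ (E 1))/E0]
    let D : Matrix (Fin 3) (Fin 3) ℂ := Matrix.diagonal ![(ϱ₁ : ℂ), (ϱ₂ : ℂ), (ϱ₃ : ℂ)]
    J * (Y * D * Y⁻¹) - (Y * D * Y⁻¹) * J
      = (-(Complex.I/lam) * ((ϱ₁ : ℂ) - (ϱ₃ : ℂ))) • (J * Q) := by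
  intro lam J Q Y D
  have hE₀ : (E0 : ℂ) ≠ 0 := mod_cast hE0.ne'
  have hγ : 1 + (E0 : ℂ) ^ 2 / ζ ^ 2 ≠ 0 := by
    rw [one_add_div (pow_ne_zero 2 hζ)]
    exact div_ne_zero (fun h => hζ2 (eq_neg_of_add_eq_zero_left h)) (pow_ne_zero 2 hζ)
  have hnorm : conj (E 0) * E 0 + conj (E 1) * E 1 = (E0 : ℂ) ^ 2 := by
    simp only [conj_mul']
    exact_mod_cast hE
  set c := I * ((ϱ₁ : ℂ) - ϱ₃) / (ζ + (E0 : ℂ) ^ 2 / ζ)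
  have hblock : J * (Y * D * Y⁻¹ + c • Q) = (Y * D * Y⁻¹ + c • Q) * J := by
    rw [show Y⁻¹ = _ from Manakov.inv_eigenvectorMatrix hE₀ hγ hnorm]
    exact (Manakov.commute_J_conj_diagonal_add_smul_potential hE₀ hζ ![(ϱ₁ : ℂ), ϱ₂, ϱ₃]).eq
  have hc : -(I / lam) * ((ϱ₁ : ℂ) - ϱ₃) = -2 * c := by
    simp only [lam, c]
    field_simp
  calc J * (Y * D * Y⁻¹) - Y * D * Y⁻¹ * J
      = (J * (Y * D * Y⁻¹ + c • Q) - (Y * D * Y⁻¹ + c • Q) * J) - c • (J * Q - Q * J) := by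
        simp only [mul_add, add_mul, mul_smul_comm, smul_mul_assoc, smul_sub]
        abel
    _ = (-2 * c) • (J * Q) := by
        rw [hblock, sub_self, show Q * J = -(J * Q) from Manakov.potential_mul_J]
        module
    _ = _ := by rw [hc]
end
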